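/- Let $u_0 : \mathbb{R}^n \to \mathbb{R}$ be bounded and uniformly continuous. Then $\lim_{t \to 0^+} \sup_{0 < s \leq t} \sup_{x \in \mathbb{R}^n} \sqrt{s}\,|\nabla (e^{s\Delta} u_0)(x)| = 0$. -/

import Mathlib

open MeasureTheory

/-- The Gaussian heat kernel on `ℝⁿ` (with the Euclidean norm). -/
noncomputable def heatKernel (n : ℕ) (t : ℝ) (x : EuclideanSpace ℝ (Fin n)) : ℝ :=
  (4 * Real.pi * t) ^ (-(n : ℝ) / 2) * Real.exp (-‖x‖ ^ 2 / (4 * t))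

/-- The heat extension `e^{tΔ}u₀`. -/
noncomputable def heatExt (n : ℕ) (u0 : EuclideanSpace ℝ (Fin n) → ℝ) (t : ℝ)
    (x : EuclideanSpace ℝ (Fin n)) : ℝ :=
  ∫ y, heatKernel n t (x - y) * u0 y

/-!
Differentiating under the integral and using that `∇G_t` is odd, hence of mean zero,
`∇(e^{tΔ}u₀)(x) = ∫ (u₀ y - u₀ x) ∇G_t(x - y) dy`. The pointwise bound
`√t |∇G_t| ≤ 2^{n/2} G_{2t}` turns `√t |∇(e^{tΔ}u₀)(x)|` into `2^{n/2}` times an average of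
`|u₀ y - u₀ x|` against the probability density `G_{2t}(x - ·)`. On `|x - y| < r` this is at
most the modulus of uniform continuity `η`; on the complement
`G_{2t} ≤ 2^{n/2} e^{-r²/(16t)} G_{4t}`, so that part is at most `2^n · 2M e^{-r²/(16t)}`,
which tends to `0` as `t → 0⁺`.
-/

open Real

lemma mul_exp_neg_sq_div_le {t : ℝ} (ht : 0 < t) (a : ℝ) :
    a * exp (-a ^ 2 / (8 * t)) ≤ 2 * √t := by
  obtain ⟨u, hu, rfl⟩ : ∃ u, 0 < u ∧ t = u ^ 2 := ⟨√t, sqrt_pos.2 ht, (sq_sqrt ht.le).symm⟩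
  have hamgm : a ≤ 2 * u * (a ^ 2 / (8 * u ^ 2) + 1) := by
    have : 2 * u * (a ^ 2 / (8 * u ^ 2) + 1) - a =
        ((a - 2 * u) ^ 2 + 4 * u ^ 2) / (4 * u) := by
      field_simp; ring
    linarith [this ▸ (by positivity : 0 ≤ ((a - 2 * u) ^ 2 + 4 * u ^ 2) / (4 * u))]
  rw [sqrt_sq hu.le, neg_div, exp_neg, ← div_eq_mul_inv, div_le_iff₀ (exp_pos _)]
  exact hamgm.trans (mul_le_mul_of_nonneg_left (add_one_le_exp _) (by positivity))

lemma exp_neg_div_le_div {a s : ℝ} (ha : 0 < a) (hs : 0 < s) : exp (-a / s) ≤ s / a := by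
  have h := (mul_exp_neg_le_exp_neg_one (a / s)).trans (exp_le_one_iff.2 (by norm_num))
  rwa [← neg_div, ← le_div_iff₀' (by positivity), one_div_div] at h

lemma exists_forall_mul_exp_neg_div_le {a c ε : ℝ} (ha : 0 < a) (hε : 0 < ε) :
    ∃ δ > 0, ∀ s, 0 < s → s ≤ δ → c * exp (-a / s) ≤ ε := by
  refine ⟨ε * a / (|c| + 1), by positivity, fun s hs hsδ => ?_⟩
  calc c * exp (-a / s) ≤ |c| * (s / a) :=
        mul_le_mul (le_abs_self c) (exp_neg_div_le_div ha hs) (exp_pos _).le (abs_nonneg c)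
    _ ≤ |c| * (ε * a / (|c| + 1) / a) := by gcongr
    _ = ε * (|c| / (|c| + 1)) := by field_simp
    _ ≤ ε := mul_le_of_le_one_right hε.le ((div_le_one (by positivity)).2 (by linarith))

section HeatKernel

variable {n : ℕ} {t : ℝ}

lemma heatKernel_pos (ht : 0 < t) (z : EuclideanSpace ℝ (Fin n)) : 0 < heatKernel n t z := by
  unfold heatKernel
  positivity

lemma heatKernel_neg (z : EuclideanSpace ℝ (Fin n)) :
    heatKernel n t (-z) = heatKernel n t z := by
  simp [heatKernel]

lemma continuous_heatKernel : Continuous (heatKernel n t) := by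
  unfold heatKernel
  fun_prop

lemma integral_heatKernel (ht : 0 < t) : ∫ z, heatKernel n t z = 1 := by
  have h := GaussianFourier.integral_rexp_neg_mul_sq_norm (V := EuclideanSpace ℝ (Fin n))
    (inv_pos.2 (by positivity : 0 < 4 * t))
  rw [finrank_euclideanSpace_fin, div_inv_eq_mul, ← mul_assoc, mul_comm π] at h
  have hexp : ∀ z : EuclideanSpace ℝ (Fin n), -‖z‖ ^ 2 / (4 * t) = -(4 * t)⁻¹ * ‖z‖ ^ 2 :=
    fun z => by ring
  simp only [heatKernel, integral_const_mul, hexp, h, rpow_neg (by positivity : 0 ≤ 4 * π * t),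
    neg_div]
  exact inv_mul_cancel₀ (by positivity)

lemma integrable_heatKernel (ht : 0 < t) : Integrable (heatKernel n t) :=
  .of_integral_ne_zero (by rw [integral_heatKernel ht]; exact one_ne_zero)

lemma heatKernel_eq_mul_heatKernel_two_mul (ht : 0 ≤ t) (z : EuclideanSpace ℝ (Fin n)) :
    heatKernel n t z =
      2 ^ ((n : ℝ) / 2) * exp (-‖z‖ ^ 2 / (8 * t)) * heatKernel n (2 * t) z := by
  have h2 : (2 : ℝ) ^ ((n : ℝ) / 2) * 2 ^ (-(n : ℝ) / 2) = 1 := by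
    rw [neg_div, rpow_neg zero_le_two, mul_inv_cancel₀ (by positivity)]
  rw [heatKernel, heatKernel, show 4 * π * (2 * t) = 2 * (4 * π * t) by ring,
    mul_rpow zero_le_two (by positivity)]
  calc _ = (2 ^ ((n : ℝ) / 2) * 2 ^ (-(n : ℝ) / 2)) * (4 * π * t) ^ (-(n : ℝ) / 2) *
        (exp (-‖z‖ ^ 2 / (8 * t)) * exp (-‖z‖ ^ 2 / (4 * (2 * t)))) := by
        rw [h2, one_mul, ← exp_add]; congr 2; ring
    _ = _ := by ring

lemma heatKernel_le_mul_heatKernel_two_mul (ht : 0 < t) (a b : EuclideanSpace ℝ (Fin n)) :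
    heatKernel n t a ≤
      2 ^ ((n : ℝ) / 2) * exp (‖a - b‖ ^ 2 / (4 * t)) * heatKernel n (2 * t) b := by
  have hb : ‖b‖ ^ 2 ≤ 2 * ‖a‖ ^ 2 + 2 * ‖a - b‖ ^ 2 := by
    have := norm_sub_le a (a - b)
    rw [sub_sub_cancel] at this
    nlinarith [norm_nonneg b, norm_nonneg (a - b), sq_nonneg (‖a‖ - ‖a - b‖)]
  have hexp : -‖a‖ ^ 2 / (8 * t) + -‖a‖ ^ 2 / (4 * (2 * t)) ≤
      ‖a - b‖ ^ 2 / (4 * t) + -‖b‖ ^ 2 / (4 * (2 * t)) := by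
    have : ‖a - b‖ ^ 2 / (4 * t) + -‖b‖ ^ 2 / (4 * (2 * t)) -
        (-‖a‖ ^ 2 / (8 * t) + -‖a‖ ^ 2 / (4 * (2 * t))) =
        (2 * ‖a‖ ^ 2 + 2 * ‖a - b‖ ^ 2 - ‖b‖ ^ 2) / (8 * t) := by
      field_simp; ring
    exact sub_nonneg.1 (this ▸ div_nonneg (by linarith) (by positivity))
  calc heatKernel n t a = 2 ^ ((n : ℝ) / 2) * (4 * π * (2 * t)) ^ (-(n : ℝ) / 2) *
        exp (-‖a‖ ^ 2 / (8 * t) + -‖a‖ ^ 2 / (4 * (2 * t))) := by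
        rw [heatKernel_eq_mul_heatKernel_two_mul ht.le, heatKernel, exp_add]; ring
    _ ≤ 2 ^ ((n : ℝ) / 2) * (4 * π * (2 * t)) ^ (-(n : ℝ) / 2) *
        exp (‖a - b‖ ^ 2 / (4 * t) + -‖b‖ ^ 2 / (4 * (2 * t))) := by gcongr
    _ = _ := by rw [heatKernel, exp_add]; ring

noncomputable def heatKernelFDeriv (n : ℕ) (t : ℝ) (z : EuclideanSpace ℝ (Fin n)) :
    EuclideanSpace ℝ (Fin n) →L[ℝ] ℝ :=
  (-(2 * t)⁻¹ * heatKernel n t z) • innerSL ℝ z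

lemma hasFDerivAt_heatKernel (z : EuclideanSpace ℝ (Fin n)) :
    HasFDerivAt (heatKernel n t) (heatKernelFDeriv n t z) z := by
  have h := (HasFDerivAt.mul_const (HasFDerivAt.neg (hasStrictFDerivAt_norm_sq z).hasFDerivAt)
    (4 * t)⁻¹).exp.const_mul ((4 * π * t) ^ (-(n : ℝ) / 2))
  have hfun : heatKernel n t = fun w => (4 * π * t) ^ (-(n : ℝ) / 2) *
      exp ((-fun w : EuclideanSpace ℝ (Fin n) => ‖w‖ ^ 2) w * (4 * t)⁻¹) := by
    ext w; simp [heatKernel, div_eq_mul_inv]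
  rw [hfun]
  refine h.congr_fderiv ?_
  ext v
  simp only [heatKernelFDeriv, heatKernel, smul_apply, neg_apply, Pi.neg_apply,
    coe_innerSL_apply, nsmul_eq_mul, Nat.cast_ofNat, smul_eq_mul, div_eq_mul_inv]
  ring

lemma continuous_heatKernelFDeriv : Continuous (heatKernelFDeriv n t) :=
  (continuous_const.mul continuous_heatKernel).smul (innerSL ℝ).continuous

lemma heatKernelFDeriv_neg (z : EuclideanSpace ℝ (Fin n)) :
    heatKernelFDeriv n t (-z) = -heatKernelFDeriv n t z := by
  simp [heatKernelFDeriv, heatKernel_neg]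

lemma norm_heatKernelFDeriv (ht : 0 < t) (z : EuclideanSpace ℝ (Fin n)) :
    ‖heatKernelFDeriv n t z‖ = (2 * t)⁻¹ * heatKernel n t z * ‖z‖ := by
  rw [heatKernelFDeriv, norm_smul, innerSL_apply_norm, norm_mul, norm_neg, norm_inv,
    Real.norm_of_nonneg (by positivity), Real.norm_of_nonneg (heatKernel_pos ht z).le]

lemma sqrt_mul_norm_heatKernelFDeriv_le (ht : 0 < t) (z : EuclideanSpace ℝ (Fin n)) :
    √t * ‖heatKernelFDeriv n t z‖ ≤ 2 ^ ((n : ℝ) / 2) * heatKernel n (2 * t) z := by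
  have hG : 0 ≤ 2 ^ ((n : ℝ) / 2) * heatKernel n (2 * t) z :=
    (mul_pos (by positivity) (heatKernel_pos (by positivity) z)).le
  have hcancel : √t / (2 * t) * (2 * √t) = 1 := by
    rw [div_mul_eq_mul_div, div_eq_one_iff_eq (by positivity)]
    linear_combination 2 * mul_self_sqrt ht.le
  rw [norm_heatKernelFDeriv ht, heatKernel_eq_mul_heatKernel_two_mul ht.le]
  calc _ = √t / (2 * t) * (‖z‖ * exp (-‖z‖ ^ 2 / (8 * t))) *
        (2 ^ ((n : ℝ) / 2) * heatKernel n (2 * t) z) := by ring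
    _ ≤ √t / (2 * t) * (2 * √t) * (2 ^ ((n : ℝ) / 2) * heatKernel n (2 * t) z) :=
        mul_le_mul_of_nonneg_right
          (mul_le_mul_of_nonneg_left (mul_exp_neg_sq_div_le ht _) (by positivity)) hG
    _ = _ := by rw [hcancel, one_mul]

lemma integrable_heatKernelFDeriv (ht : 0 < t) : Integrable (heatKernelFDeriv n t) := by
  refine ((integrable_heatKernel (n := n) (by positivity : 0 < 2 * t)).const_mul
    ((√t)⁻¹ * 2 ^ ((n : ℝ) / 2))).mono' continuous_heatKernelFDeriv.aestronglyMeasurable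
    (.of_forall fun z => ?_)
  rw [mul_assoc, ← div_eq_inv_mul, le_div_iff₀' (sqrt_pos.2 ht)]
  exact sqrt_mul_norm_heatKernelFDeriv_le ht z

lemma exists_norm_heatKernelFDeriv_le (ht : 0 < t) : ∃ C, ∀ a b : EuclideanSpace ℝ (Fin n),
    ‖a - b‖ ≤ 1 → ‖heatKernelFDeriv n t a‖ ≤ C * heatKernel n (4 * t) b := by
  refine ⟨(√t)⁻¹ * 2 ^ ((n : ℝ) / 2) * (2 ^ ((n : ℝ) / 2) * exp (1 / (4 * (2 * t)))),
    fun a b hab => ?_⟩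
  have hshift := heatKernel_le_mul_heatKernel_two_mul (n := n) (by positivity : 0 < 2 * t) a b
  rw [show 2 * (2 * t) = 4 * t by ring] at hshift
  have hexp : exp (‖a - b‖ ^ 2 / (4 * (2 * t))) ≤ exp (1 / (4 * (2 * t))) := by
    gcongr
    exact pow_le_one₀ (norm_nonneg _) hab
  calc ‖heatKernelFDeriv n t a‖ ≤ (√t)⁻¹ * (2 ^ ((n : ℝ) / 2) * heatKernel n (2 * t) a) := by
        rw [← div_eq_inv_mul, le_div_iff₀' (sqrt_pos.2 ht)]
        exact sqrt_mul_norm_heatKernelFDeriv_le ht a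
    _ ≤ (√t)⁻¹ * (2 ^ ((n : ℝ) / 2) *
          (2 ^ ((n : ℝ) / 2) * exp (1 / (4 * (2 * t))) * heatKernel n (4 * t) b)) := by
        gcongr
        exact hshift.trans (mul_le_mul_of_nonneg_right
          (mul_le_mul_of_nonneg_left hexp (by positivity)) (heatKernel_pos (by positivity) b).le)
    _ = _ := by ring

lemma integral_heatKernelFDeriv_sub (x : EuclideanSpace ℝ (Fin n)) :
    ∫ y, heatKernelFDeriv n t (x - y) = 0 := by
  have h := integral_neg_eq_self (heatKernelFDeriv n t) volume
  simp only [heatKernelFDeriv_neg, integral_neg, neg_eq_iff_add_eq_zero, ← two_smul ℝ] at h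
  rw [integral_sub_left_eq_self _ volume x]
  exact (smul_eq_zero.1 h).resolve_left two_ne_zero

end HeatKernel

section HeatExt

variable {n : ℕ} {t M : ℝ} {u0 : EuclideanSpace ℝ (Fin n) → ℝ}

lemma hasFDerivAt_heatExt (ht : 0 < t) (hu : AEStronglyMeasurable u0) (hb : ∀ y, |u0 y| ≤ M)
    (x : EuclideanSpace ℝ (Fin n)) :
    HasFDerivAt (heatExt n u0 t) (∫ y, u0 y • heatKernelFDeriv n t (x - y)) x := by
  obtain ⟨C, hC⟩ := exists_norm_heatKernelFDeriv_le (n := n) ht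
  have hM : 0 ≤ M := (abs_nonneg _).trans (hb x)
  have hsub (x' : EuclideanSpace ℝ (Fin n)) : Continuous fun y => x' - y := by fun_prop
  refine hasFDerivAt_integral_of_dominated_of_fderiv_le (Metric.ball_mem_nhds x one_pos)
    (F := fun x y => heatKernel n t (x - y) * u0 y)
    (F' := fun x y => u0 y • heatKernelFDeriv n t (x - y))
    (bound := fun y => M * (C * heatKernel n (4 * t) (x - y)))
    (.of_forall fun x' => (continuous_heatKernel.comp (hsub x')).aestronglyMeasurable.mul hu)
    (((integrable_heatKernel ht).comp_sub_left x).mul_bdd hu (.of_forall hb))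
    (hu.smul (continuous_heatKernelFDeriv.comp (hsub x)).aestronglyMeasurable)
    (.of_forall fun y x' hx' => ?_)
    ((((integrable_heatKernel (by positivity)).comp_sub_left x).const_mul C).const_mul M)
    (.of_forall fun y x' _ => ?_)
  · rw [norm_smul, Real.norm_eq_abs]
    refine mul_le_mul (hb y) (hC _ _ ?_) (norm_nonneg _) hM
    rw [sub_sub_sub_cancel_right, ← dist_eq_norm]
    exact (Metric.mem_ball.1 hx').le
  · exact ((hasFDerivAt_heatKernel (x' - y)).comp x' ((hasFDerivAt_id x').sub_const y)).mul_const
      (u0 y)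

lemma integral_smul_heatKernelFDeriv_eq_integral_sub_smul (ht : 0 < t)
    (hu : AEStronglyMeasurable u0) (hb : ∀ y, |u0 y| ≤ M) (x : EuclideanSpace ℝ (Fin n)) :
    ∫ y, u0 y • heatKernelFDeriv n t (x - y) =
      ∫ y, (u0 y - u0 x) • heatKernelFDeriv n t (x - y) := by
  have hG' : Integrable fun y => heatKernelFDeriv n t (x - y) :=
    (integrable_heatKernelFDeriv ht).comp_sub_left x
  have hint : Integrable fun y => u0 y • heatKernelFDeriv n t (x - y) :=
    hG'.bdd_smul M hu (.of_forall hb)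
  have hconst : Integrable fun y => u0 x • heatKernelFDeriv n t (x - y) := hG'.smul (u0 x)
  rw [funext fun y => sub_smul (u0 y) (u0 x) (heatKernelFDeriv n t (x - y)),
    integral_sub hint hconst, integral_smul, integral_heatKernelFDeriv_sub, smul_zero, sub_zero]

lemma integral_abs_sub_mul_heatKernel_le (ht : 0 < t) (hb : ∀ y, |u0 y| ≤ M)
    {x : EuclideanSpace ℝ (Fin n)} {r η : ℝ} (hη0 : 0 ≤ η) (hr : 0 ≤ r)
    (hη : ∀ y, dist y x < r → |u0 y - u0 x| ≤ η) :
    ∫ y, |u0 y - u0 x| * heatKernel n t (x - y) ≤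
      η + 2 * M * 2 ^ ((n : ℝ) / 2) * exp (-r ^ 2 / (8 * t)) := by
  have hM : 0 ≤ M := (abs_nonneg _).trans (hb x)
  set K := 2 * M * 2 ^ ((n : ℝ) / 2) * exp (-r ^ 2 / (8 * t))
  have hK : 0 ≤ K := by positivity
  have hpt (y : EuclideanSpace ℝ (Fin n)) : |u0 y - u0 x| * heatKernel n t (x - y) ≤
      η * heatKernel n t (x - y) + K * heatKernel n (2 * t) (x - y) := by
    have hG := heatKernel_pos (n := n) ht (x - y)
    have hG2 := heatKernel_pos (n := n) (by positivity : 0 < 2 * t) (x - y)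
    rcases lt_or_ge (dist y x) r with hy | hy
    · nlinarith [hη y hy]
    · have htail : heatKernel n t (x - y) ≤
          2 ^ ((n : ℝ) / 2) * exp (-r ^ 2 / (8 * t)) * heatKernel n (2 * t) (x - y) := by
        rw [heatKernel_eq_mul_heatKernel_two_mul ht.le]
        gcongr
        rwa [← dist_eq_norm, dist_comm]
      have hdiff : |u0 y - u0 x| ≤ 2 * M := by linarith [abs_sub (u0 y) (u0 x), hb y, hb x]
      calc _ ≤ 2 * M * (2 ^ ((n : ℝ) / 2) * exp (-r ^ 2 / (8 * t)) *
            heatKernel n (2 * t) (x - y)) := mul_le_mul hdiff htail hG.le (by linarith)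
        _ ≤ _ := by nlinarith
  have hint (s : ℝ) (hs : 0 < s) : Integrable fun y => heatKernel n s (x - y) :=
    (integrable_heatKernel hs).comp_sub_left x
  calc _ ≤ ∫ y, (η * heatKernel n t (x - y) + K * heatKernel n (2 * t) (x - y)) :=
        integral_mono_of_nonneg
          (.of_forall fun y => mul_nonneg (abs_nonneg _) (heatKernel_pos ht _).le)
          (((hint t ht).const_mul η).add ((hint _ (by positivity)).const_mul K)) (.of_forall hpt)
    _ = η + K := by
        rw [integral_add ((hint t ht).const_mul η) ((hint _ (by positivity)).const_mul K),
          integral_const_mul, integral_const_mul, integral_sub_left_eq_self _ volume x,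
          integral_sub_left_eq_self (heatKernel n (2 * t)) volume x, integral_heatKernel ht,
          integral_heatKernel (by positivity), mul_one, mul_one]

lemma sqrt_mul_norm_fderiv_heatExt_le (ht : 0 < t) (hu : AEStronglyMeasurable u0)
    (hb : ∀ y, |u0 y| ≤ M) {r η : ℝ} (hη0 : 0 ≤ η) (hr : 0 ≤ r) (x : EuclideanSpace ℝ (Fin n))
    (hη : ∀ y, dist y x < r → |u0 y - u0 x| ≤ η) :
    √t * ‖fderiv ℝ (heatExt n u0 t) x‖ ≤
      2 ^ ((n : ℝ) / 2) * (η + 2 * M * 2 ^ ((n : ℝ) / 2) * exp (-r ^ 2 / (16 * t))) := by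
  have hG : Integrable fun y => heatKernel n (2 * t) (x - y) :=
    (integrable_heatKernel (by positivity)).comp_sub_left x
  have hdiff (y : EuclideanSpace ℝ (Fin n)) : ‖|u0 y - u0 x|‖ ≤ 2 * M := by
    rw [Real.norm_eq_abs, abs_abs]
    linarith [abs_sub (u0 y) (u0 x), hb y, hb x]
  rw [(hasFDerivAt_heatExt ht hu hb x).fderiv,
    integral_smul_heatKernelFDeriv_eq_integral_sub_smul ht hu hb]
  calc √t * ‖∫ y, (u0 y - u0 x) • heatKernelFDeriv n t (x - y)‖
      ≤ √t * ∫ y, ‖(u0 y - u0 x) • heatKernelFDeriv n t (x - y)‖ := by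
        gcongr; exact norm_integral_le_integral_norm _
    _ = ∫ y, |u0 y - u0 x| * (√t * ‖heatKernelFDeriv n t (x - y)‖) := by
        rw [← integral_const_mul]
        simp_rw [norm_smul, Real.norm_eq_abs, mul_left_comm]
    _ ≤ ∫ y, 2 ^ ((n : ℝ) / 2) * (|u0 y - u0 x| * heatKernel n (2 * t) (x - y)) :=
        integral_mono_of_nonneg (.of_forall fun y => by positivity)
          ((hG.bdd_mul (hu.sub aestronglyMeasurable_const).norm (.of_forall hdiff)).const_mul _)
          (.of_forall fun y => (mul_le_mul_of_nonneg_left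
            (sqrt_mul_norm_heatKernelFDeriv_le ht _) (abs_nonneg _)).trans_eq (mul_left_comm _ _ _))
    _ ≤ _ := by
        rw [integral_const_mul, show 16 * t = 8 * (2 * t) by ring]
        gcongr
        exact integral_abs_sub_mul_heatKernel_le (by positivity) hb hη0 hr hη

end HeatExt

/-- For bounded, uniformly continuous `u₀`, the weighted gradient of the heat
extension vanishes uniformly as `t → 0⁺`:
`lim_{t→0⁺} sup_{0<s≤t} sup_x √s |∇(e^{sΔ}u₀)(x)| = 0`. -/
theorem sqrt_mul_norm_fderiv_heatExt_tendsto_zero (n : ℕ)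
    (u0 : EuclideanSpace ℝ (Fin n) → ℝ) (M : ℝ)
    (hb : ∀ y, |u0 y| ≤ M) (hu0 : UniformContinuous u0) :
    ∀ ε > 0, ∃ δ > 0, ∀ s : ℝ, 0 < s → s ≤ δ →
      ∀ x, Real.sqrt s * ‖fderiv ℝ (fun z => heatExt n u0 s z) x‖ ≤ ε := by
  intro ε hε
  set K : ℝ := 2 ^ ((n : ℝ) / 2)
  have hK : 0 < K := by positivity
  obtain ⟨r, hr, hη⟩ := Metric.uniformContinuous_iff.1 hu0 (ε / (2 * K)) (by positivity)
  obtain ⟨δ, hδ, htail⟩ := exists_forall_mul_exp_neg_div_le (c := 2 * M * K)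
    (by positivity : 0 < r ^ 2 / 16) (by positivity : 0 < ε / (2 * K))
  refine ⟨δ, hδ, fun s hs hsδ x => ?_⟩
  calc √s * ‖fderiv ℝ (heatExt n u0 s) x‖
      ≤ K * (ε / (2 * K) + 2 * M * K * exp (-r ^ 2 / (16 * s))) :=
        sqrt_mul_norm_fderiv_heatExt_le hs hu0.continuous.aestronglyMeasurable hb
          (by positivity) hr.le x (fun y hy => (hη hy).le)
    _ ≤ K * (ε / (2 * K) + ε / (2 * K)) := by
        rw [show -r ^ 2 / (16 * s) = -(r ^ 2 / 16) / s by ring]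
        gcongr
        exact htail s hs hsδ
    _ = ε := by field_simp; ring
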